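/- arXiv:2204.11984 — 7 statements merged into one kernel-verified Lean document; each statement's English description precedes it below -/
import Mathlib

section
/- The Dirichlet domain D is the topological interior of D̄; moreover, a point H ∈ E belongs to D if and only if H is the unique element of minimal norm in the coset H + Γ. -/
/-!
For `γ ≠ 0` the condition `‖H‖ ≤ ‖H + γ‖` says `⟪γ, H⟫ ≥ -‖γ‖²/2`, a closed half-space whose
interior is the strict half-space; hence `interior D̄ ⊆ D`. Conversely `D` is open: a point `x`
with `‖x + γ‖ ≤ ‖x‖` has `‖γ‖ ≤ 2‖x‖`, so near any point only the finitely many lattice vectors of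
a bounded ball (`Γ` is discrete and closed in a proper space) impose a condition. The coset
characterization is the substitution `x = H + γ`.
-/

open Metric Set
open scoped RealInnerProductSpace

section HalfSpace

variable {E : Type*} [NormedAddCommGroup E] [InnerProductSpace ℝ E]

lemma norm_le_norm_add_iff_inner (x γ : E) : ‖x‖ ≤ ‖x + γ‖ ↔ -(‖γ‖ ^ 2 / 2) ≤ ⟪γ, x⟫ := by
  rw [← sq_le_sq₀ (norm_nonneg _) (norm_nonneg _), norm_add_sq_real, real_inner_comm]
  constructor <;> intro h <;> linarith

lemma norm_lt_norm_add_iff_inner (x γ : E) : ‖x‖ < ‖x + γ‖ ↔ -(‖γ‖ ^ 2 / 2) < ⟪γ, x⟫ := by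
  rw [← sq_lt_sq₀ (norm_nonneg _) (norm_nonneg _), norm_add_sq_real, real_inner_comm]
  constructor <;> intro h <;> linarith

lemma interior_setOf_norm_le_norm_add {γ : E} (hγ : γ ≠ 0) :
    interior {x : E | ‖x‖ ≤ ‖x + γ‖} = {x | ‖x‖ < ‖x + γ‖} := by
  have hf : innerSL ℝ γ ≠ 0 := by
    simpa [← norm_ne_zero_iff (E := StrongDual ℝ E), innerSL_apply_norm] using hγ
  have hclosed : {x : E | ‖x‖ ≤ ‖x + γ‖} = innerSL ℝ γ ⁻¹' Ici (-(‖γ‖ ^ 2 / 2)) := by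
    ext x; simp [norm_le_norm_add_iff_inner]
  have hopen : {x : E | ‖x‖ < ‖x + γ‖} = innerSL ℝ γ ⁻¹' Ioi (-(‖γ‖ ^ 2 / 2)) := by
    ext x; simp [norm_lt_norm_add_iff_inner]
  rw [hclosed, hopen, ← interior_Ici, ((innerSL ℝ γ).isOpenMap_of_ne_zero hf)
    |>.preimage_interior_eq_interior_preimage (innerSL ℝ γ).continuous]

end HalfSpace

section Lattice

variable {E : Type*} [NormedAddCommGroup E]

lemma norm_le_two_mul_of_norm_add_le {x γ : E} (h : ‖x + γ‖ ≤ ‖x‖) : ‖γ‖ ≤ 2 * ‖x‖ := by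
  have := norm_sub_le (x + γ) x
  rw [add_sub_cancel_left] at this
  linarith

lemma AddSubgroup.finite_inter_closedBall [ProperSpace E] (Γ : AddSubgroup E)
    [DiscreteTopology Γ] (r : ℝ) : ((Γ : Set E) ∩ closedBall 0 r).Finite := by
  rw [inter_comm]
  exact finite_isBounded_inter_isClosed DiscreteTopology.isDiscrete isBounded_closedBall
    AddSubgroup.isClosed_of_discrete

lemma isOpen_setOf_forall_norm_lt_norm_add [ProperSpace E] (Γ : AddSubgroup E)
    [DiscreteTopology Γ] : IsOpen {x : E | ∀ γ ∈ Γ, γ ≠ 0 → ‖x‖ < ‖x + γ‖} := by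
  let F : ((Γ : Set E) \ {0} : Set E) → Set E := fun γ => {x | ‖x + γ‖ ≤ ‖x‖}
  have hcompl : {x : E | ∀ γ ∈ Γ, γ ≠ 0 → ‖x‖ < ‖x + γ‖}ᶜ = ⋃ γ, F γ := by
    ext x; simp [F, and_assoc]
  have hF : LocallyFinite F := by
    intro x
    refine ⟨ball x 1, ball_mem_nhds x one_pos, ?_⟩
    refine ((Γ.finite_inter_closedBall (2 * (‖x‖ + 1))).preimage
      Subtype.val_injective.injOn).subset ?_
    rintro ⟨γ, hγΓ, _⟩ ⟨y, hyF, hy⟩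
    have hyx : ‖y‖ < ‖x‖ + 1 := by
      have := norm_le_norm_add_norm_sub' y x
      rw [mem_ball, dist_eq_norm] at hy
      linarith
    refine ⟨hγΓ, mem_closedBall_zero_iff.2 ?_⟩
    linarith [norm_le_two_mul_of_norm_add_le hyF]
  rw [← isClosed_compl_iff, hcompl]
  exact hF.isClosed_iUnion fun γ => isClosed_le (by fun_prop) (by fun_prop)

end Lattice

theorem dirichlet_interior_and_unique_min_general {E : Type*}
    [NormedAddCommGroup E] [InnerProductSpace ℝ E] [FiniteDimensional ℝ E]
    (Γ : AddSubgroup E) [DiscreteTopology Γ] :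
    {H : E | ∀ γ ∈ Γ, γ ≠ 0 → ‖H‖ < ‖H + γ‖} =
      interior {H : E | ∀ γ ∈ Γ, ‖H‖ ≤ ‖H + γ‖} ∧
    ∀ H : E, (∀ γ ∈ Γ, γ ≠ 0 → ‖H‖ < ‖H + γ‖) ↔
      (∀ x : E, x - H ∈ Γ → x ≠ H → ‖H‖ < ‖x‖) := by
  refine ⟨Subset.antisymm ?_ ?_, fun H => ⟨?_, ?_⟩⟩
  · refine interior_maximal (fun H hH γ hγ => ?_) (isOpen_setOf_forall_norm_lt_norm_add Γ)
    rcases eq_or_ne γ 0 with rfl | hγ0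
    · simp
    · exact (hH γ hγ hγ0).le
  · intro H hH γ hγ hγ0
    have hH' : H ∈ interior {x : E | ‖x‖ ≤ ‖x + γ‖} :=
      interior_mono (fun x (hx : ∀ γ ∈ Γ, ‖x‖ ≤ ‖x + γ‖) => hx γ hγ) hH
    rwa [interior_setOf_norm_le_norm_add hγ0] at hH'
  · intro h x hx hxH
    simpa using h (x - H) hx (sub_ne_zero.2 hxH)
  · intro h γ hγ hγ0
    exact h (H + γ) (by simpa using hγ) (by simpa using hγ0)

/-- Proposition 4.3(iii) of [SS18]: the Dirichlet domain
`D = {H : ‖H‖ < ‖H + γ‖ for all γ ∈ Γ, γ ≠ 0}` of a full-rank lattice `Γ`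
is the interior of `D̄ = {H : ‖H‖ ≤ ‖H + γ‖ for all γ ∈ Γ}`; moreover
`H ∈ D` iff `H` is the unique element of minimal norm in the coset `H + Γ`. -/
theorem dirichlet_interior_and_unique_min {E : Type*}
    [NormedAddCommGroup E] [InnerProductSpace ℝ E] [FiniteDimensional ℝ E]
    (Γ : AddSubgroup E) [DiscreteTopology Γ]
    (hspan : Submodule.span ℝ (Γ : Set E) = ⊤) :
    {H : E | ∀ γ ∈ Γ, γ ≠ 0 → ‖H‖ < ‖H + γ‖} =
      interior {H : E | ∀ γ ∈ Γ, ‖H‖ ≤ ‖H + γ‖} ∧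
    ∀ H : E, (∀ γ ∈ Γ, γ ≠ 0 → ‖H‖ < ‖H + γ‖) ↔
      (∀ x : E, x - H ∈ Γ → x ≠ H → ‖H‖ < ‖x‖) :=
  dirichlet_interior_and_unique_min_general Γ
end

section
/- A point H ∈ E lies in the topological frontier of the Dirichlet domain D if and only if tH ∈ D̄ for every t ∈ [0,1] and tH ∉ D̄ for every t > 1. (This is the lattice formulation of the statement that the tangent cut locus of the flat torus E/Γ at the origin is the boundary of D.) -/
/-!
Along the ray `t ↦ t • H`, the gap `‖t • H + γ‖² - ‖t • H‖²` to each lattice translate is affine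
in `t`, equal to `‖γ‖² > 0` at `t = 0`. Hence `D̄` is star-shaped, `t • H ∈ D` for `t < 1`
whenever `H ∈ D̄`, and once some gap vanishes at `t = 1` it becomes negative for `t > 1`. So
`closure D = D̄`, and as `D` is open (only finitely many lattice vectors compete near a point),
the frontier of `D` is `D̄ \ D`: exactly the points where the ray leaves `D̄`.
-/

open Set Metric Filter Topology

section RayGap

variable {E : Type*} [NormedAddCommGroup E] [InnerProductSpace ℝ E] {x γ : E} {t : ℝ}

lemma norm_smul_add_sq_sub_norm_smul_sq (x γ : E) (t : ℝ) :
    ‖t • x + γ‖ ^ 2 - ‖t • x‖ ^ 2 = t * (‖x + γ‖ ^ 2 - ‖x‖ ^ 2) + (1 - t) * ‖γ‖ ^ 2 := by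
  rw [norm_add_sq_real, norm_add_sq_real, real_inner_smul_left]
  ring

lemma norm_smul_le_norm_smul_add (h : ‖x‖ ≤ ‖x + γ‖) (ht₀ : 0 ≤ t) (ht₁ : t ≤ 1) :
    ‖t • x‖ ≤ ‖t • x + γ‖ := by
  rw [← sq_le_sq₀ (norm_nonneg _) (norm_nonneg _), ← sub_nonneg,
    norm_smul_add_sq_sub_norm_smul_sq]
  have h_sq := (sq_le_sq₀ (norm_nonneg x) (norm_nonneg (x + γ))).2 h
  exact add_nonneg (mul_nonneg ht₀ (sub_nonneg.2 h_sq)) (mul_nonneg (sub_nonneg.2 ht₁) (sq_nonneg _))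

lemma norm_smul_lt_norm_smul_add (h : ‖x‖ ≤ ‖x + γ‖) (hγ : γ ≠ 0) (ht₀ : 0 ≤ t) (ht₁ : t < 1) :
    ‖t • x‖ < ‖t • x + γ‖ := by
  rw [← sq_lt_sq₀ (norm_nonneg _) (norm_nonneg _), ← sub_pos,
    norm_smul_add_sq_sub_norm_smul_sq]
  have h_sq := (sq_le_sq₀ (norm_nonneg x) (norm_nonneg (x + γ))).2 h
  exact add_pos_of_nonneg_of_pos (mul_nonneg ht₀ (sub_nonneg.2 h_sq))
    (mul_pos (sub_pos.2 ht₁) (pow_pos (norm_pos_iff.2 hγ) 2))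

lemma norm_smul_add_lt_norm_smul (h : ‖x + γ‖ = ‖x‖) (hγ : γ ≠ 0) (ht : 1 < t) :
    ‖t • x + γ‖ < ‖t • x‖ := by
  rw [← sq_lt_sq₀ (norm_nonneg _) (norm_nonneg _), ← sub_neg,
    norm_smul_add_sq_sub_norm_smul_sq, h, sub_self, mul_zero, zero_add]
  exact mul_neg_of_neg_of_pos (sub_neg.2 ht) (pow_pos (norm_pos_iff.2 hγ) 2)

end RayGap

section DirichletDomain

variable {E : Type*} [NormedAddCommGroup E] (Γ : AddSubgroup E)

def dirichletDomain : Set E := {x | ∀ γ ∈ Γ, γ ≠ 0 → ‖x‖ < ‖x + γ‖}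

def closedDirichletDomain : Set E := {x | ∀ γ ∈ Γ, ‖x‖ ≤ ‖x + γ‖}

variable {Γ}

lemma dirichletDomain_subset_closedDirichletDomain :
    dirichletDomain Γ ⊆ closedDirichletDomain Γ := by
  intro x hx γ hγ
  rcases eq_or_ne γ 0 with rfl | hγ₀
  · simp
  · exact (hx γ hγ hγ₀).le

variable (Γ) in
lemma isClosed_closedDirichletDomain : IsClosed (closedDirichletDomain Γ) := by
  have h : closedDirichletDomain Γ = ⋂ γ ∈ Γ, {x : E | ‖x‖ ≤ ‖x + γ‖} := by
    ext x
    simp [closedDirichletDomain]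
  rw [h]
  exact isClosed_biInter fun γ _ => isClosed_le continuous_norm (by fun_prop)

variable (Γ) in
lemma isOpen_dirichletDomain [ProperSpace E] [DiscreteTopology Γ] :
    IsOpen (dirichletDomain Γ) := by
  let S : Set E := (Γ : Set E) \ {0}
  have h : dirichletDomain Γ = (⋃ γ : S, {x : E | ‖x + γ‖ ≤ ‖x‖})ᶜ := by
    ext x
    simp [dirichletDomain, S, and_imp]
  rw [h]
  refine (LocallyFinite.isClosed_iUnion ?_ fun γ => isClosed_le (by fun_prop) continuous_norm)
    |>.isOpen_compl
  intro x
  refine ⟨ball x 1, ball_mem_nhds x one_pos, ?_⟩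
  have h_fin : (closedBall (0 : E) (2 * ‖x‖ + 2) ∩ Γ).Finite :=
    finite_isBounded_inter_isClosed DiscreteTopology.isDiscrete isBounded_closedBall
      AddSubgroup.isClosed_of_discrete
  refine (h_fin.preimage Subtype.val_injective.injOn).subset ?_
  rintro ⟨γ, hγ⟩ ⟨y, h_closer, hy⟩
  replace h_closer : ‖y + γ‖ ≤ ‖y‖ := h_closer
  -- together with `h_closer`, this forces `‖γ‖ ≤ 2 ‖y‖`
  have h_tri : ‖γ‖ ≤ ‖y + γ‖ + ‖y‖ := by
    simpa using norm_sub_le (y + γ) y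
  have h_y : ‖y‖ < ‖x‖ + 1 := by
    have := norm_sub_norm_le y x
    have := mem_ball_iff_norm.1 hy
    linarith
  refine ⟨?_, hγ.1⟩
  rw [mem_closedBall, dist_zero_right]
  linarith

variable [InnerProductSpace ℝ E]

lemma smul_mem_closedDirichletDomain {x : E} (hx : x ∈ closedDirichletDomain Γ) {t : ℝ}
    (ht : t ∈ Icc 0 1) : t • x ∈ closedDirichletDomain Γ :=
  fun γ hγ => norm_smul_le_norm_smul_add (hx γ hγ) ht.1 ht.2

lemma smul_mem_dirichletDomain {x : E} (hx : x ∈ closedDirichletDomain Γ) {t : ℝ}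
    (ht : t ∈ Ico 0 1) : t • x ∈ dirichletDomain Γ :=
  fun γ hγ hγ₀ => norm_smul_lt_norm_smul_add (hx γ hγ) hγ₀ ht.1 ht.2

lemma smul_notMem_closedDirichletDomain {x : E} (hx : x ∈ closedDirichletDomain Γ)
    (hxD : x ∉ dirichletDomain Γ) {t : ℝ} (ht : 1 < t) : t • x ∉ closedDirichletDomain Γ := by
  obtain ⟨γ, hγ, hγ₀, h_le⟩ : ∃ γ ∈ Γ, γ ≠ 0 ∧ ‖x + γ‖ ≤ ‖x‖ := by
    simpa [dirichletDomain] using hxD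
  intro htx
  exact (norm_smul_add_lt_norm_smul (le_antisymm h_le (hx γ hγ)) hγ₀ ht).not_ge (htx γ hγ)

lemma closure_dirichletDomain : closure (dirichletDomain Γ) = closedDirichletDomain Γ := by
  refine subset_antisymm ((isClosed_closedDirichletDomain Γ).closure_subset_iff.2
    dirichletDomain_subset_closedDirichletDomain) fun x hx => ?_
  have h_lim : Tendsto (fun t : ℝ => t • x) (𝓝[<] 1) (𝓝 x) := by
    refine tendsto_nhdsWithin_of_tendsto_nhds ?_
    simpa using (tendsto_id (x := 𝓝 (1 : ℝ))).smul_const x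
  refine mem_closure_of_tendsto h_lim ?_
  filter_upwards [Ico_mem_nhdsLT (zero_lt_one' ℝ)] with t ht
  exact smul_mem_dirichletDomain hx ht

lemma frontier_dirichletDomain [ProperSpace E] [DiscreteTopology Γ] :
    frontier (dirichletDomain Γ) = closedDirichletDomain Γ \ dirichletDomain Γ := by
  rw [(isOpen_dirichletDomain Γ).frontier_eq, closure_dirichletDomain]

end DirichletDomain

theorem frontier_dirichlet_iff_cut_point_general {E : Type*}
    [NormedAddCommGroup E] [InnerProductSpace ℝ E] [FiniteDimensional ℝ E]
    (Γ : AddSubgroup E) [DiscreteTopology Γ]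
    (H : E) :
    H ∈ frontier {x : E | ∀ γ ∈ Γ, γ ≠ 0 → ‖x‖ < ‖x + γ‖} ↔
      ((∀ t : ℝ, t ∈ Set.Icc (0 : ℝ) 1 → ∀ γ ∈ Γ, ‖t • H‖ ≤ ‖t • H + γ‖) ∧
       (∀ t : ℝ, 1 < t → ¬ (∀ γ ∈ Γ, ‖t • H‖ ≤ ‖t • H + γ‖))) := by
  change H ∈ frontier (dirichletDomain Γ) ↔
    (∀ t ∈ Icc (0 : ℝ) 1, t • H ∈ closedDirichletDomain Γ) ∧
      ∀ t : ℝ, 1 < t → t • H ∉ closedDirichletDomain Γ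
  rw [frontier_dirichletDomain]
  constructor
  · rintro ⟨hC, hD⟩
    exact ⟨fun t ht => smul_mem_closedDirichletDomain hC ht,
      fun t ht => smul_notMem_closedDirichletDomain hC hD ht⟩
  · rintro ⟨h_le, h_gt⟩
    refine ⟨by simpa using h_le 1 ⟨zero_le_one, le_rfl⟩, fun hD => ?_⟩
    -- `D` is open, so the ray stays in `D ⊆ D̄` slightly beyond `H`
    have h_lim : Tendsto (fun t : ℝ => t • H) (𝓝[>] 1) (𝓝 H) := by
      refine tendsto_nhdsWithin_of_tendsto_nhds ?_
      simpa using (tendsto_id (x := 𝓝 (1 : ℝ))).smul_const H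
    obtain ⟨t, htD, ht⟩ := ((h_lim.eventually ((isOpen_dirichletDomain Γ).mem_nhds hD)).and
      self_mem_nhdsWithin).exists
    exact h_gt t ht (dirichletDomain_subset_closedDirichletDomain htD)

/-- The tangent cut locus of the flat torus `E/Γ` at the origin, in lattice form:
`H` lies in the frontier of the Dirichlet domain `D` of the full-rank lattice `Γ`
iff `tH ∈ D̄` for all `t ∈ [0,1]` and `tH ∉ D̄` for all `t > 1`. -/
theorem frontier_dirichlet_iff_cut_point {E : Type*}
    [NormedAddCommGroup E] [InnerProductSpace ℝ E] [FiniteDimensional ℝ E]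
    (Γ : AddSubgroup E) [DiscreteTopology Γ]
    (hspan : Submodule.span ℝ (Γ : Set E) = ⊤) (H : E) :
    H ∈ frontier {x : E | ∀ γ ∈ Γ, γ ≠ 0 → ‖x‖ < ‖x + γ‖} ↔
      ((∀ t : ℝ, t ∈ Set.Icc (0 : ℝ) 1 → ∀ γ ∈ Γ, ‖t • H‖ ≤ ‖t • H + γ‖) ∧
       (∀ t : ℝ, 1 < t → ¬ (∀ γ ∈ Γ, ‖t • H‖ ≤ ‖t • H + γ‖))) :=
  frontier_dirichlet_iff_cut_point_general Γ H
end

section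
/- The Dirichlet domain of the fundamental lattice Γ₀ is the open alcove at the origin: {H ∈ E : ‖H‖ < ‖H + γ‖ for every nonzero γ ∈ Γ₀} = {H ∈ E : ⟨α, H⟩ < π for every α ∈ Φ}. -/
open scoped RealInnerProductSpace

/-!
Expanding norms, `‖H‖ < ‖H + γ‖` means `2⟪-γ, H⟫ < ‖γ‖²`, and for `γ = -π α^∨` this is
`⟪α, H⟫ < π`; this gives the inclusion into the alcove. Conversely, write `-γ ∈ Γ₀` as a sum of
vectors `π α_i^∨` with as few terms as possible. If two of the roots `α, β` made an obtuse angle,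
they would either cancel or, as one of their Cartan integers is then `-1`, satisfy
`π α^∨ + π β^∨ = π δ^∨` for the reflected root `δ = r_β α` or `r_α β`, shortening the sum.
So the `α_i` are pairwise acute, and
`‖∑ π α_i^∨‖² ≥ ∑ ‖π α_i^∨‖² > 2 ∑ ⟪π α_i^∨, H⟫` for `H` in the alcove.
-/

section InnerProduct

variable {F : Type*} [NormedAddCommGroup F] [InnerProductSpace ℝ F]

theorem real_inner_list_sum_right (x : F) (l : List F) :
    ⟪x, l.sum⟫ = (l.map (⟪x, ·⟫)).sum :=
  map_list_sum (innerₛₗ ℝ x) l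

theorem norm_lt_norm_sub_iff_two_mul_real_inner_lt (x y : F) :
    ‖x‖ < ‖x - y‖ ↔ 2 * ⟪y, x⟫ < ‖y‖ ^ 2 := by
  rw [← sq_lt_sq₀ (norm_nonneg _) (norm_nonneg _), norm_sub_sq_real, real_inner_comm]
  constructor <;> intro h <;> linarith

theorem sum_norm_sq_le_norm_sum_sq {l : List F} (hl : l.Pairwise (0 ≤ ⟪·, ·⟫)) :
    (l.map (‖·‖ ^ 2)).sum ≤ ‖l.sum‖ ^ 2 := by
  induction l with
  | nil => simp
  | cons x t ih =>
    rw [List.pairwise_cons] at hl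
    have hcross : 0 ≤ ⟪x, t.sum⟫ := by
      rw [real_inner_list_sum_right]
      exact List.sum_nonneg (by simpa using hl.1)
    simp only [List.map_cons, List.sum_cons, norm_add_sq_real]
    linarith [ih hl.2]

end InnerProduct

section Coroot

variable {E : Type*} [NormedAddCommGroup E] [InnerProductSpace ℝ E]

/-- `π α^∨`; these generate the fundamental lattice `Γ₀`. -/
noncomputable def piCoroot (α : E) : E := (2 * Real.pi / ⟪α, α⟫) • α

noncomputable def rootReflection (α β : E) : E := β - (2 * ⟪β, α⟫ / ⟪α, α⟫) • α

theorem rootReflection_self {α : E} (hα : α ≠ 0) : rootReflection α α = -α := by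
  rw [rootReflection, mul_div_assoc, div_self (inner_self_ne_zero.2 hα), mul_one, two_smul]
  abel

theorem piCoroot_neg (α : E) : piCoroot (-α) = -piCoroot α := by
  simp [piCoroot]

theorem piCoroot_ne_zero {α : E} (hα : α ≠ 0) : piCoroot α ≠ 0 := by
  have := real_inner_self_pos.2 hα
  exact smul_ne_zero (by positivity) hα

theorem real_inner_piCoroot_left (α x : E) :
    ⟪piCoroot α, x⟫ = 2 * Real.pi / ⟪α, α⟫ * ⟪α, x⟫ :=
  real_inner_smul_left _ _ _

theorem norm_piCoroot_sq {α : E} (hα : α ≠ 0) :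
    ‖piCoroot α‖ ^ 2 = 4 * Real.pi ^ 2 / ⟪α, α⟫ := by
  have := (real_inner_self_pos.2 hα).ne'
  rw [← real_inner_self_eq_norm_sq, real_inner_piCoroot_left, piCoroot, real_inner_smul_right]
  field_simp
  ring

theorem two_mul_real_inner_piCoroot_lt_iff {α : E} (hα : α ≠ 0) (x : E) :
    2 * ⟪piCoroot α, x⟫ < ‖piCoroot α‖ ^ 2 ↔ ⟪α, x⟫ < Real.pi := by
  have hc : 0 < 4 * Real.pi / ⟪α, α⟫ := by
    have := real_inner_self_pos.2 hα
    positivity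
  have h2 : 2 * ⟪piCoroot α, x⟫ = 4 * Real.pi / ⟪α, α⟫ * ⟪α, x⟫ := by
    rw [real_inner_piCoroot_left]
    ring
  have hn : ‖piCoroot α‖ ^ 2 = 4 * Real.pi / ⟪α, α⟫ * Real.pi := by
    rw [norm_piCoroot_sq hα]
    ring
  rw [h2, hn, mul_lt_mul_iff_right₀ hc]

theorem real_inner_piCoroot_nonneg {α β : E} (h : 0 ≤ ⟪α, β⟫) :
    0 ≤ ⟪piCoroot α, piCoroot β⟫ := by
  rw [real_inner_piCoroot_left, piCoroot, real_inner_smul_right]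
  have := real_inner_self_nonneg (x := α)
  have := real_inner_self_nonneg (x := β)
  have := Real.pi_pos
  positivity

theorem real_inner_rootReflection_self {α : E} (hα : α ≠ 0) (β : E) :
    ⟪rootReflection α β, rootReflection α β⟫ = ⟪β, β⟫ := by
  have := (real_inner_self_pos.2 hα).ne'
  rw [rootReflection, inner_sub_sub_self, real_inner_smul_left, real_inner_smul_right,
    real_inner_smul_left, real_inner_smul_right, real_inner_comm α β]
  field_simp
  ring

/-- Reflections are isometries, so they commute with taking (scaled) coroots. -/
theorem piCoroot_rootReflection {α : E} (hα : α ≠ 0) (β : E) :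
    piCoroot (rootReflection α β) = piCoroot β - (2 * ⟪β, α⟫ / ⟪β, β⟫) • piCoroot α := by
  rw [piCoroot, real_inner_rootReflection_self hα, rootReflection, smul_sub, piCoroot,
    piCoroot, smul_smul, smul_smul]
  congr 2
  ring

theorem two_inner_div_eq_neg_one_or {α β : E} (hαβ : ⟪α, β⟫ < 0) (hsum : α + β ≠ 0)
    (hm : ∃ m : ℤ, 2 * ⟪β, α⟫ / ⟪α, α⟫ = m) (hn : ∃ n : ℤ, 2 * ⟪α, β⟫ / ⟪β, β⟫ = n) :
    2 * ⟪β, α⟫ / ⟪α, α⟫ = -1 ∨ 2 * ⟪α, β⟫ / ⟪β, β⟫ = -1 := by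
  have int_le_neg_two : ∀ {x : ℝ}, (∃ k : ℤ, x = k) → x < 0 → x ≠ -1 → x ≤ -2 := by
    rintro _ ⟨k, rfl⟩ hk hk'
    have : k < 0 := by exact_mod_cast hk
    have : k ≠ -1 := by rintro rfl; simp at hk'
    exact_mod_cast (by omega : k ≤ -2)
  have hA : 0 < ⟪α, α⟫ := real_inner_self_pos.2 (by rintro rfl; simp at hαβ)
  have hB : 0 < ⟪β, β⟫ := real_inner_self_pos.2 (by rintro rfl; simp at hαβ)
  rw [real_inner_comm] at hm ⊢
  by_contra! h
  have hm2 := int_le_neg_two hm (div_neg_of_neg_of_pos (by linarith) hA) h.1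
  have hn2 := int_le_neg_two hn (div_neg_of_neg_of_pos (by linarith) hB) h.2
  rw [div_le_iff₀ hA] at hm2
  rw [div_le_iff₀ hB] at hn2
  have := real_inner_self_pos.2 hsum
  rw [inner_add_add_self, real_inner_comm α β] at this
  linarith

theorem two_mul_real_inner_sum_piCoroot_lt {l : List E} (hl : l ≠ []) (hne : ∀ α ∈ l, α ≠ 0)
    (hpair : l.Pairwise (0 ≤ ⟪·, ·⟫)) {x : E} (hx : ∀ α ∈ l, ⟪α, x⟫ < Real.pi) :
    2 * ⟪(l.map piCoroot).sum, x⟫ < ‖(l.map piCoroot).sum‖ ^ 2 := by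
  have hlt : ∀ α ∈ l, 2 * ⟪piCoroot α, x⟫ < ‖piCoroot α‖ ^ 2 := fun α hα =>
    (two_mul_real_inner_piCoroot_lt_iff (hne α hα) x).2 (hx α hα)
  obtain ⟨α₀, hα₀⟩ := List.exists_mem_of_ne_nil l hl
  calc 2 * ⟪(l.map piCoroot).sum, x⟫ = (l.map fun α => 2 * ⟪piCoroot α, x⟫).sum := by
        rw [List.sum_map_mul_left, real_inner_comm, real_inner_list_sum_right, List.map_map]
        simp only [Function.comp_def, real_inner_comm x]
    _ < (l.map fun α => ‖piCoroot α‖ ^ 2).sum :=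
        List.sum_lt_sum _ _ (fun α hα => (hlt α hα).le) ⟨α₀, hα₀, hlt α₀ hα₀⟩
    _ ≤ ‖(l.map piCoroot).sum‖ ^ 2 := by
        simpa only [List.map_map, Function.comp_def] using sum_norm_sq_le_norm_sum_sq
          (List.pairwise_map.2 (hpair.imp real_inner_piCoroot_nonneg))

end Coroot

section RootSystem

variable {E : Type*} [NormedAddCommGroup E] [InnerProductSpace ℝ E] {Φ : Set E}

theorem exists_piCoroot_eq_add_of_inner_neg
    (hrefl : ∀ α ∈ Φ, ∀ β ∈ Φ, rootReflection α β ∈ Φ)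
    (hint : ∀ α ∈ Φ, ∀ β ∈ Φ, ∃ n : ℤ, 2 * ⟪β, α⟫ / ⟪α, α⟫ = (n : ℝ))
    {α β : E} (hα : α ∈ Φ) (hβ : β ∈ Φ) (hαβ : ⟪α, β⟫ < 0) (hsum : α + β ≠ 0) :
    ∃ δ ∈ Φ, piCoroot δ = piCoroot α + piCoroot β := by
  have hα0 : α ≠ 0 := by rintro rfl; simp at hαβ
  have hβ0 : β ≠ 0 := by rintro rfl; simp at hαβ
  rcases two_inner_div_eq_neg_one_or hαβ hsum (hint α hα β hβ) (hint β hβ α hα) with h | h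
  · refine ⟨rootReflection β α, hrefl β hβ α hα, ?_⟩
    rw [piCoroot_rootReflection hβ0, real_inner_comm, h, neg_one_smul, sub_neg_eq_add]
  · refine ⟨rootReflection α β, hrefl α hα β hβ, ?_⟩
    rw [piCoroot_rootReflection hα0, real_inner_comm, h, neg_one_smul, sub_neg_eq_add, add_comm]

theorem exists_list_of_mem_closure_piCoroot (hneg : ∀ α ∈ Φ, -α ∈ Φ) {γ : E}
    (hγ : γ ∈ AddSubgroup.closure (piCoroot '' Φ)) :
    ∃ l : List E, (∀ α ∈ l, α ∈ Φ) ∧ (l.map piCoroot).sum = γ := by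
  induction hγ using AddSubgroup.closure_induction with
  | mem _ hx =>
    obtain ⟨α, hα, rfl⟩ := hx
    exact ⟨[α], by simpa using hα, by simp⟩
  | zero => exact ⟨[], by simp, rfl⟩
  | add _ _ _ _ ih₁ ih₂ =>
    obtain ⟨l₁, hl₁, rfl⟩ := ih₁
    obtain ⟨l₂, hl₂, rfl⟩ := ih₂
    refine ⟨l₁ ++ l₂, fun α hα => ?_, by simp⟩
    rcases List.mem_append.1 hα with h | h
    exacts [hl₁ α h, hl₂ α h]
  | neg _ _ ih =>
    obtain ⟨l, hl, rfl⟩ := ih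
    refine ⟨l.map (-·), fun α hα => ?_, ?_⟩
    · obtain ⟨β, hβ, rfl⟩ := List.mem_map.1 hα
      exact hneg β (hl β hβ)
    · simp [List.sum_neg, Function.comp_def, piCoroot_neg]

theorem exists_pairwise_inner_nonneg_sum_piCoroot_eq
    (hrefl : ∀ α ∈ Φ, ∀ β ∈ Φ, rootReflection α β ∈ Φ)
    (hint : ∀ α ∈ Φ, ∀ β ∈ Φ, ∃ n : ℤ, 2 * ⟪β, α⟫ / ⟪α, α⟫ = (n : ℝ))
    (l : List E) (hl : ∀ α ∈ l, α ∈ Φ) :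
    ∃ l' : List E, (∀ α ∈ l', α ∈ Φ) ∧ l'.Pairwise (0 ≤ ⟪·, ·⟫) ∧
      (l'.map piCoroot).sum = (l.map piCoroot).sum := by
  induction hlen : l.length using Nat.strong_induction_on generalizing l with
  | _ n ih =>
  by_cases hpair : l.Pairwise (0 ≤ ⟪·, ·⟫)
  · exact ⟨l, hl, hpair, rfl⟩
  obtain ⟨α, β, hsub, hαβ⟩ : ∃ α β, [α, β].Sublist l ∧ ⟪α, β⟫ < 0 := by
    simpa [List.pairwise_iff_forall_sublist] using hpair
  obtain ⟨t, hperm⟩ := hsub.exists_perm_append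
  have hmem : ∀ x ∈ α :: β :: t, x ∈ Φ := fun x hx => hl x (hperm.mem_iff.2 hx)
  have hsum : (l.map piCoroot).sum = piCoroot α + piCoroot β + (t.map piCoroot).sum := by
    rw [(hperm.map piCoroot).sum_eq]
    simp [add_assoc]
  have htlen : t.length + 2 = n := by simpa [← hlen] using hperm.length_eq.symm
  by_cases hcancel : α + β = 0
  · obtain ⟨l', hl'Φ, hl', hl'sum⟩ :=
      ih t.length (by omega) t (fun x hx => hmem x (by simp [hx])) rfl
    refine ⟨l', hl'Φ, hl', ?_⟩
    rw [hl'sum, hsum, eq_neg_of_add_eq_zero_right hcancel, piCoroot_neg, add_neg_cancel, zero_add]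
  · obtain ⟨δ, hδ, hδsum⟩ := exists_piCoroot_eq_add_of_inner_neg hrefl hint
      (hmem α (by simp)) (hmem β (by simp)) hαβ hcancel
    obtain ⟨l', hl'Φ, hl', hl'sum⟩ := ih (δ :: t).length (by simp; omega) (δ :: t)
      (by simpa [hδ] using fun x hx => hmem x (by simp [hx])) rfl
    refine ⟨l', hl'Φ, hl', ?_⟩
    rw [hl'sum, hsum, List.map_cons, List.sum_cons, hδsum]

end RootSystem

theorem dirichlet_of_fundamental_lattice_eq_alcove_general {E : Type*}
    [NormedAddCommGroup E] [InnerProductSpace ℝ E]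
    (Φ : Finset E)
    (hne : ∀ α ∈ Φ, α ≠ 0)
    (hrefl : ∀ α ∈ Φ, ∀ β ∈ Φ, β - (2 * ⟪β, α⟫ / ⟪α, α⟫) • α ∈ Φ)
    (hint : ∀ α ∈ Φ, ∀ β ∈ Φ, ∃ n : ℤ, 2 * ⟪β, α⟫ / ⟪α, α⟫ = (n : ℝ))
    (Γ₀ : AddSubgroup E)
    (hΓ₀ : Γ₀ = AddSubgroup.closure ((fun α : E => (2 * Real.pi / ⟪α, α⟫) • α) '' Φ)) :
    {H : E | ∀ γ ∈ Γ₀, γ ≠ 0 → ‖H‖ < ‖H + γ‖} =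
      {H : E | ∀ α ∈ Φ, ⟪α, H⟫ < Real.pi} := by
  change Γ₀ = AddSubgroup.closure (piCoroot '' (Φ : Set E)) at hΓ₀
  have hneg : ∀ α ∈ Φ, -α ∈ Φ := fun α hα => by
    have h : rootReflection α α ∈ Φ := hrefl α hα α hα
    rwa [rootReflection_self (hne α hα)] at h
  ext H
  simp only [Set.mem_ofPred_eq, ← sub_neg_eq_add H, norm_lt_norm_sub_iff_two_mul_real_inner_lt]
  constructor
  · intro hD α hα
    rw [← two_mul_real_inner_piCoroot_lt_iff (hne α hα)]
    simpa using hD _ (hΓ₀ ▸ neg_mem (AddSubgroup.subset_closure ⟨α, hα, rfl⟩))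
      (neg_ne_zero.2 (piCoroot_ne_zero (hne α hα)))
  · intro hH γ hγ hγ0
    obtain ⟨l₀, hl₀, hl₀sum⟩ := exists_list_of_mem_closure_piCoroot hneg (hΓ₀ ▸ neg_mem hγ)
    obtain ⟨l, hlΦ, hl, hlsum⟩ := exists_pairwise_inner_nonneg_sum_piCoroot_eq hrefl hint l₀ hl₀
    rw [hl₀sum] at hlsum
    rw [← hlsum]
    refine two_mul_real_inner_sum_piCoroot_lt ?_ (fun α hα => hne α (hlΦ α hα)) hl
      (fun α hα => hH α (hlΦ α hα))
    rintro rfl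
    exact hγ0 (by simpa using hlsum.symm)

/-- Theorem 4.5(i) of [SS18] / Theorem `thm-steinberg`(i): the Dirichlet domain of
the fundamental lattice `Γ₀` (generated by `π α^∨`, `α ∈ Φ`) of a crystallographic
root system `Φ` is the open alcove at the origin `{H : ⟨α, H⟩ < π for all α ∈ Φ}`. -/
theorem dirichlet_of_fundamental_lattice_eq_alcove {E : Type*}
    [NormedAddCommGroup E] [InnerProductSpace ℝ E] [FiniteDimensional ℝ E]
    (Φ : Finset E)
    (hne : ∀ α ∈ Φ, α ≠ 0)
    (hspan : Submodule.span ℝ (Φ : Set E) = ⊤)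
    (hrefl : ∀ α ∈ Φ, ∀ β ∈ Φ, β - (2 * ⟪β, α⟫ / ⟪α, α⟫) • α ∈ Φ)
    (hint : ∀ α ∈ Φ, ∀ β ∈ Φ, ∃ n : ℤ, 2 * ⟪β, α⟫ / ⟪α, α⟫ = (n : ℝ))
    (Γ₀ : AddSubgroup E)
    (hΓ₀ : Γ₀ = AddSubgroup.closure ((fun α : E => (2 * Real.pi / ⟪α, α⟫) • α) '' Φ)) :
    {H : E | ∀ γ ∈ Γ₀, γ ≠ 0 → ‖H‖ < ‖H + γ‖} =
      {H : E | ∀ α ∈ Φ, ⟪α, H⟫ < Real.pi} :=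
  dirichlet_of_fundamental_lattice_eq_alcove_general Φ hne hrefl hint Γ₀ hΓ₀
end

section
/- Let Γ be any additive subgroup of E with Γ₀ ⊆ Γ ⊆ Γ₁, where Γ₁ = {H ∈ E : ⟨α, H⟩ ∈ πℤ for every α ∈ Φ}, and let H ∈ E. Then W^q = {w ∈ W : wH − H ∈ Γ} is a subgroup of W, and W₀(H) is a normal subgroup of W^q. -/
open scoped RealInnerProductSpace


section Aux
variable {E : Type*} [NormedAddCommGroup E] [InnerProductSpace ℝ E]
  (Φ : Finset E)

/-- A reflection is its own inverse. -/
lemma weyl_refl_inv (hne : ∀ α ∈ Φ, α ≠ 0)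
    {w : E ≃ₗ[ℝ] E} (hw : ∃ α ∈ Φ, ∀ x : E, w x = x - (2 * ⟪x, α⟫ / ⟪α, α⟫) • α) :
    w⁻¹ = w := by
  obtain ⟨α, hα, hw⟩ := hw
  have hs : ⟪α, α⟫ ≠ 0 := fun h => hne α hα (inner_self_eq_zero.mp h)
  refine (eq_inv_of_mul_eq_one_left (LinearEquiv.ext fun x => ?_)).symm
  show w (w x) = x
  rw [hw, hw, inner_sub_left, real_inner_smul_left, sub_sub, ← add_smul]
  have : 2 * ⟪x, α⟫ / ⟪α, α⟫ +
      2 * (⟪x, α⟫ - 2 * ⟪x, α⟫ / ⟪α, α⟫ * ⟪α, α⟫) / ⟪α, α⟫ = 0 := by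
    field_simp
    ring
  rw [this, zero_smul, sub_zero]

lemma weyl_orth (hne : ∀ α ∈ Φ, α ≠ 0) {w : E ≃ₗ[ℝ] E}
    (hw : w ∈ Subgroup.closure {w : E ≃ₗ[ℝ] E | ∃ α ∈ Φ,
        ∀ x : E, w x = x - (2 * ⟪x, α⟫ / ⟪α, α⟫) • α}) :
    ∀ x y : E, ⟪w x, w y⟫ = ⟪x, y⟫ := by
  induction hw using Subgroup.closure_induction with
  | mem w hw =>
    obtain ⟨α, hα, hw⟩ := hw
    have hs : ⟪α, α⟫ ≠ 0 := fun h => hne α hα (inner_self_eq_zero.mp h)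
    intro x y
    rw [hw, hw, inner_sub_left, inner_sub_right, inner_sub_right,
      real_inner_smul_left, real_inner_smul_right, real_inner_smul_right,
      real_inner_smul_left]
    field_simp
    rw [real_inner_comm α y]
    ring
  | one => intro x y; rfl
  | mul a b _ _ ha hb => intro x y; exact (ha (b x) (b y)).trans (hb x y)
  | inv a _ ha =>
    intro x y
    have h1 : a (a⁻¹ x) = x := a.apply_symm_apply x
    have h2 : a (a⁻¹ y) = y := a.apply_symm_apply y
    calc ⟪a⁻¹ x, a⁻¹ y⟫ = ⟪a (a⁻¹ x), a (a⁻¹ y)⟫ := (ha _ _).symm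
    _ = ⟪x, y⟫ := by rw [h1, h2]

lemma weyl_maps_phi (hne : ∀ α ∈ Φ, α ≠ 0)
    (hrefl : ∀ α ∈ Φ, ∀ β ∈ Φ, β - (2 * ⟪β, α⟫ / ⟪α, α⟫) • α ∈ Φ)
    {w : E ≃ₗ[ℝ] E}
    (hw : w ∈ Subgroup.closure {w : E ≃ₗ[ℝ] E | ∃ α ∈ Φ,
        ∀ x : E, w x = x - (2 * ⟪x, α⟫ / ⟪α, α⟫) • α}) :
    ∀ α ∈ Φ, w α ∈ Φ := by
  have key : (∀ α ∈ Φ, w α ∈ Φ) ∧ (∀ α ∈ Φ, w⁻¹ α ∈ Φ) := by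
    induction hw using Subgroup.closure_induction with
    | mem w hw =>
      have h1 : ∀ α ∈ Φ, w α ∈ Φ := by
        obtain ⟨α, hα, hw⟩ := hw
        intro β hβ; rw [hw]; exact hrefl α hα β hβ
      exact ⟨h1, by rw [weyl_refl_inv Φ hne hw]; exact h1⟩
    | one => exact ⟨fun α hα => hα, fun α hα => hα⟩
    | mul a b _ _ ha hb =>
      refine ⟨fun α hα => ha.1 _ (hb.1 α hα), fun α hα => ?_⟩
      rw [mul_inv_rev]
      exact hb.2 _ (ha.2 α hα)
    | inv a _ ha => exact ⟨ha.2, by rw [inv_inv]; exact ha.1⟩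
  exact key.1

lemma weyl_coef_mem (hne : ∀ α ∈ Φ, α ≠ 0)
    (Γ : AddSubgroup E)
    (hgen : ∀ α ∈ Φ, (2 * Real.pi / ⟪α, α⟫) • α ∈ Γ)
    {α : E} (hα : α ∈ Φ) {x : E} {n : ℤ} (hn : ⟪α, x⟫ = (n : ℝ) * Real.pi) :
    (2 * ⟪x, α⟫ / ⟪α, α⟫) • α ∈ Γ := by
  have h : (2 * ⟪x, α⟫ / ⟪α, α⟫) • α = n • ((2 * Real.pi / ⟪α, α⟫) • α) := by
    rw [← Int.cast_smul_eq_zsmul ℝ, smul_smul, real_inner_comm α x, hn]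
    congr 1
    ring
  rw [h]
  exact zsmul_mem (hgen α hα) n

lemma weyl_gamma (hne : ∀ α ∈ Φ, α ≠ 0)
    (Γ : AddSubgroup E)
    (hgen : ∀ α ∈ Φ, (2 * Real.pi / ⟪α, α⟫) • α ∈ Γ)
    (hΓΓ₁ : ∀ γ ∈ Γ, ∀ α ∈ Φ, ∃ n : ℤ, ⟪α, γ⟫ = (n : ℝ) * Real.pi)
    {w : E ≃ₗ[ℝ] E}
    (hw : w ∈ Subgroup.closure {w : E ≃ₗ[ℝ] E | ∃ α ∈ Φ,
        ∀ x : E, w x = x - (2 * ⟪x, α⟫ / ⟪α, α⟫) • α}) :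
    ∀ γ ∈ Γ, w γ - γ ∈ Γ := by
  have key : (∀ γ ∈ Γ, w γ - γ ∈ Γ) ∧ (∀ γ ∈ Γ, w⁻¹ γ - γ ∈ Γ) := by
    induction hw using Subgroup.closure_induction with
    | mem w hw =>
      have h1 : ∀ γ ∈ Γ, w γ - γ ∈ Γ := by
        obtain ⟨α, hα, hw⟩ := hw
        intro γ hγ
        obtain ⟨n, hn⟩ := hΓΓ₁ γ hγ α hα
        have : w γ - γ = -((2 * ⟪γ, α⟫ / ⟪α, α⟫) • α) := by rw [hw]; abel
        rw [this]
        exact neg_mem (weyl_coef_mem Φ hne Γ hgen hα hn)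
      exact ⟨h1, by rw [weyl_refl_inv Φ hne hw]; exact h1⟩
    | one => constructor <;> · intro γ hγ; simpa using zero_mem Γ
    | mul a b _ _ ha hb =>
      have hmul : ∀ c d : E ≃ₗ[ℝ] E, (∀ γ ∈ Γ, c γ - γ ∈ Γ) → (∀ γ ∈ Γ, d γ - γ ∈ Γ) →
          ∀ γ ∈ Γ, (c * d) γ - γ ∈ Γ := by
        intro c d hc hd γ hγ
        have hdγ : d γ ∈ Γ := by simpa using add_mem (hd γ hγ) hγ
        have : (c * d) γ - γ = (c (d γ) - d γ) + (d γ - γ) := by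
          show c (d γ) - γ = _; abel
        rw [this]
        exact add_mem (hc _ hdγ) (hd γ hγ)
      exact ⟨hmul a b ha.1 hb.1, by rw [mul_inv_rev]; exact hmul b⁻¹ a⁻¹ hb.2 ha.2⟩
    | inv a _ ha => exact ⟨ha.2, by rw [inv_inv]; exact ha.1⟩
  exact key.1
end Aux


/-- For any additive subgroup `Γ` with `Γ₀ ⊆ Γ ⊆ Γ₁` and any `H ∈ E`, the set
`W^q = {w ∈ W : wH - H ∈ Γ}` is a subgroup of the Weyl group `W`, and `W₀(H)` is
a normal subgroup of `W^q`. -/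
theorem Wq_subgroup_and_W0_normal {E : Type*}
    [NormedAddCommGroup E] [InnerProductSpace ℝ E] [FiniteDimensional ℝ E]
    (Φ : Finset E)
    (hne : ∀ α ∈ Φ, α ≠ 0)
    (hspan : Submodule.span ℝ (Φ : Set E) = ⊤)
    (hrefl : ∀ α ∈ Φ, ∀ β ∈ Φ, β - (2 * ⟪β, α⟫ / ⟪α, α⟫) • α ∈ Φ)
    (hint : ∀ α ∈ Φ, ∀ β ∈ Φ, ∃ n : ℤ, 2 * ⟪β, α⟫ / ⟪α, α⟫ = (n : ℝ))
    (Γ₀ : AddSubgroup E)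
    (hΓ₀ : Γ₀ = AddSubgroup.closure ((fun α : E => (2 * Real.pi / ⟪α, α⟫) • α) '' Φ))
    (Γ : AddSubgroup E) (hΓ₀Γ : Γ₀ ≤ Γ)
    (hΓΓ₁ : ∀ γ ∈ Γ, ∀ α ∈ Φ, ∃ n : ℤ, ⟪α, γ⟫ = (n : ℝ) * Real.pi)
    (W : Subgroup (E ≃ₗ[ℝ] E))
    (hW : W = Subgroup.closure {w : E ≃ₗ[ℝ] E | ∃ α ∈ Φ,
        ∀ x : E, w x = x - (2 * ⟪x, α⟫ / ⟪α, α⟫) • α})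
    (H : E)
    (W₀H : Subgroup (E ≃ₗ[ℝ] E))
    (hW₀H : W₀H = Subgroup.closure {w : E ≃ₗ[ℝ] E | ∃ α ∈ Φ,
        (∃ n : ℤ, ⟪α, H⟫ = (n : ℝ) * Real.pi) ∧
        ∀ x : E, w x = x - (2 * ⟪x, α⟫ / ⟪α, α⟫) • α}) :
    (∃ Wq : Subgroup (E ≃ₗ[ℝ] E),
        (Wq : Set (E ≃ₗ[ℝ] E)) = {w : E ≃ₗ[ℝ] E | w ∈ W ∧ w H - H ∈ Γ}) ∧
    (∀ v ∈ W₀H, v ∈ W ∧ v H - H ∈ Γ) ∧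
    (∀ w : E ≃ₗ[ℝ] E, w ∈ W → w H - H ∈ Γ → ∀ v ∈ W₀H, w * v * w⁻¹ ∈ W₀H) := by
  subst hW hW₀H
  -- the generators of Γ₀ lie in Γ
  have hgen : ∀ α ∈ Φ, (2 * Real.pi / ⟪α, α⟫) • α ∈ Γ := by
    intro α hα
    exact hΓ₀Γ (hΓ₀ ▸ AddSubgroup.subset_closure ⟨α, hα, rfl⟩)
  -- main invariance lemma, specialized
  have hg : ∀ w : E ≃ₗ[ℝ] E, w ∈ Subgroup.closure {w : E ≃ₗ[ℝ] E | ∃ α ∈ Φ,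
        ∀ x : E, w x = x - (2 * ⟪x, α⟫ / ⟪α, α⟫) • α} → ∀ γ ∈ Γ, w γ - γ ∈ Γ :=
    fun w hw => weyl_gamma Φ hne Γ hgen hΓΓ₁ hw
  set S : Set (E ≃ₗ[ℝ] E) := {w : E ≃ₗ[ℝ] E | ∃ α ∈ Φ,
        ∀ x : E, w x = x - (2 * ⟪x, α⟫ / ⟪α, α⟫) • α} with hS
  -- W^q as a subgroup
  have hinvH : ∀ w : E ≃ₗ[ℝ] E, w ∈ Subgroup.closure S → w H - H ∈ Γ →
      w⁻¹ H - H ∈ Γ := by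
    intro a haW haΓ
    have h3 : a⁻¹ (a H - H) ∈ Γ := by
      simpa using add_mem (hg a⁻¹ (inv_mem haW) _ haΓ) haΓ
    have h4 : a⁻¹ H - H = -(a⁻¹ (a H - H)) := by
      rw [map_sub]
      have : a⁻¹ (a H) = H := a.symm_apply_apply H
      rw [this]
      abel
    rw [h4]
    exact neg_mem h3
  refine ⟨⟨{ carrier := {w : E ≃ₗ[ℝ] E | w ∈ Subgroup.closure S ∧ w H - H ∈ Γ}
           , one_mem' := ⟨one_mem _, by simpa using zero_mem Γ⟩
           , mul_mem' := ?_
           , inv_mem' := ?_ }, rfl⟩, ?_, ?_⟩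
  · rintro a b ⟨haW, haΓ⟩ ⟨hbW, hbΓ⟩
    refine ⟨mul_mem haW hbW, ?_⟩
    have h1 : a (b H - H) - (b H - H) ∈ Γ := hg a haW _ hbΓ
    have h2 : (a * b) H - H = (a H - H) + ((a (b H - H) - (b H - H)) + (b H - H)) := by
      show a (b H) - H = _
      rw [map_sub]
      abel
    rw [h2]
    exact add_mem haΓ (add_mem h1 hbΓ)
  · rintro a ⟨haW, haΓ⟩
    exact ⟨inv_mem haW, hinvH a haW haΓ⟩
  · -- W₀(H) ⊆ W^q
    intro v hv
    induction hv using Subgroup.closure_induction with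
    | mem v hv =>
      obtain ⟨α, hα, ⟨n, hn⟩, hv⟩ := hv
      refine ⟨Subgroup.subset_closure ⟨α, hα, hv⟩, ?_⟩
      have : v H - H = -((2 * ⟪H, α⟫ / ⟪α, α⟫) • α) := by rw [hv]; abel
      rw [this]
      exact neg_mem (weyl_coef_mem Φ hne Γ hgen hα hn)
    | one => exact ⟨one_mem _, by simpa using zero_mem Γ⟩
    | mul a b _ _ ha hb =>
      refine ⟨mul_mem ha.1 hb.1, ?_⟩
      have h1 : a (b H - H) - (b H - H) ∈ Γ := hg a ha.1 _ hb.2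
      have h2 : (a * b) H - H = (a H - H) + ((a (b H - H) - (b H - H)) + (b H - H)) := by
        show a (b H) - H = _
        rw [map_sub]
        abel
      rw [h2]
      exact add_mem ha.2 (add_mem h1 hb.2)
    | inv a _ ha => exact ⟨inv_mem ha.1, hinvH a ha.1 ha.2⟩
  · -- normality
    intro w hwW hwΓ v hv
    induction hv using Subgroup.closure_induction with
    | mem v hv =>
      obtain ⟨α, hα, ⟨n, hn⟩, hv⟩ := hv
      have horth := weyl_orth Φ hne hwW
      have hβΦ : w α ∈ Φ := weyl_maps_phi Φ hne hrefl hwW α hα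
      have hββ : ⟪w α, w α⟫ = ⟪α, α⟫ := horth α α
      -- ⟪w α, H⟫ is an integer multiple of π
      have hδ : w⁻¹ (w H - H) ∈ Γ := by
        simpa using add_mem (hg w⁻¹ (inv_mem hwW) _ hwΓ) hwΓ
      obtain ⟨m, hm⟩ := hΓΓ₁ _ hδ α hα
      have hwiH : w⁻¹ H = H - w⁻¹ (w H - H) := by
        rw [map_sub]
        have : w⁻¹ (w H) = H := w.symm_apply_apply H
        rw [this]
        abel
      have hβH : ⟪w α, H⟫ = ((n - m : ℤ) : ℝ) * Real.pi := by
        have e1 : ⟪w α, H⟫ = ⟪α, w⁻¹ H⟫ := by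
          have := horth α (w⁻¹ H)
          have h2 : w (w⁻¹ H) = H := w.apply_symm_apply H
          rw [h2] at this
          exact this
        rw [e1, hwiH, inner_sub_right, hn, hm]
        push_cast
        ring
      refine Subgroup.subset_closure ⟨w α, hβΦ, ⟨n - m, hβH⟩, fun x => ?_⟩
      show w (v (w⁻¹ x)) = _
      have e2 : ⟪w⁻¹ x, α⟫ = ⟪x, w α⟫ := by
        have := horth (w⁻¹ x) α
        have h2 : w (w⁻¹ x) = x := w.apply_symm_apply x
        rw [h2] at this
        exact this.symm
      have h2 : w (w⁻¹ x) = x := w.apply_symm_apply x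
      rw [hv, map_sub, map_smul, h2, e2, hββ]
    | one => simpa using one_mem _
    | mul a b _ _ ha hb =>
      have : w * (a * b) * w⁻¹ = (w * a * w⁻¹) * (w * b * w⁻¹) := by group
      rw [this]
      exact mul_mem ha hb
    | inv a _ ha =>
      have : w * a⁻¹ * w⁻¹ = (w * a * w⁻¹)⁻¹ := by group
      rw [this]
      exact inv_mem ha
end

section
/- Under the polar decomposition hypothesis, the normalizer of K in G decomposes as N_G(K) = (T ∩ N_G(K))·K, i.e. every element of N_G(K) is a product of an element of T ∩ N_G(K) and an element of K. -/
/-! Writing `n = k t l` with `k, l ∈ K`, the middle factor `t = k⁻¹ n l⁻¹` normalizes `K` as soon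
as `n` does, and then `n = t · (t⁻¹ k t) l` with `t⁻¹ k t ∈ K`. -/

/-- The subgroup of fixed points of an automorphism `σ` of a group `G`. -/
def fixSubgroup {G : Type*} [Group G] (σ : G ≃* G) : Subgroup G where
  carrier := {g : G | σ g = g}
  one_mem' := map_one σ
  mul_mem' := by
    intro a b ha hb
    simp only [Set.mem_setOf_eq] at *
    rw [map_mul, ha, hb]
  inv_mem' := by
    intro a ha
    simp only [Set.mem_setOf_eq] at *
    rw [map_inv, ha]

namespace Subgroup

variable {G : Type*} [Group G] {H : Subgroup G} {k t l : G}

theorem mem_normalizer_of_mul_mul_mem_normalizer (hk : k ∈ H) (hl : l ∈ H)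
    (h : k * t * l ∈ normalizer (H : Set G)) : t ∈ normalizer (H : Set G) := by
  have ht : t = k⁻¹ * (k * t * l) * l⁻¹ := by group
  rw [ht]
  exact mul_mem (mul_mem (inv_mem (le_normalizer hk)) h) (inv_mem (le_normalizer hl))

theorem exists_mul_mul_eq_mul_of_mem_normalizer (hk : k ∈ H) (hl : l ∈ H)
    (ht : t ∈ normalizer (H : Set G)) : ∃ m ∈ H, k * t * l = t * m :=
  ⟨t⁻¹ * k * t * l, mul_mem ((mem_normalizer_iff''.mp ht k).mp hk) hl, by group⟩

end Subgroup

theorem normalizer_polar_decomposition_general {G : Type*} [Group G]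
    (σ : G ≃* G)
    (T : Subgroup G)
    (polar : ∀ g : G, ∃ k ∈ fixSubgroup σ, ∃ t ∈ T, ∃ l ∈ fixSubgroup σ,
      g = k * t * l) :
    ∀ n ∈ Subgroup.normalizer (fixSubgroup σ : Set G),
      ∃ t ∈ T ⊓ Subgroup.normalizer (fixSubgroup σ : Set G), ∃ k ∈ fixSubgroup σ, n = t * k := by
  intro n hn
  obtain ⟨k, hk, t, htT, l, hl, rfl⟩ := polar n
  have htN := Subgroup.mem_normalizer_of_mul_mul_mem_normalizer hk hl hn
  exact ⟨t, ⟨htT, htN⟩, Subgroup.exists_mul_mul_eq_mul_of_mem_normalizer hk hl htN⟩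

/-- Under the polar decomposition `G = KTK` (with `K = fix(σ)`, `T` abelian and
inverted by `σ`), the normalizer of `K` decomposes as `N_G(K) = (T ∩ N_G(K))·K`. -/
theorem normalizer_polar_decomposition {G : Type*} [Group G]
    (σ : G ≃* G) (hσ : ∀ g, σ (σ g) = g)
    (T : Subgroup G) (hTcomm : ∀ a ∈ T, ∀ b ∈ T, a * b = b * a)
    (hσT : ∀ t ∈ T, σ t = t⁻¹)
    (polar : ∀ g : G, ∃ k ∈ fixSubgroup σ, ∃ t ∈ T, ∃ l ∈ fixSubgroup σ,
      g = k * t * l) :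
    ∀ n ∈ Subgroup.normalizer (fixSubgroup σ : Set G),
      ∃ t ∈ T ⊓ Subgroup.normalizer (fixSubgroup σ : Set G), ∃ k ∈ fixSubgroup σ, n = t * k :=
  normalizer_polar_decomposition_general σ T polar
end

section
/- Under the polar decomposition hypothesis, T ∩ Z_G(K) = T ∩ Z(G); that is, an element of T centralizes K if and only if it is central in G. -/
/-- Under the polar decomposition `G = KTK` (with `K = fix(σ)`, `T` abelian and
inverted by `σ`), one has `T ∩ Z_G(K) = T ∩ Z(G)`: an element of `T`
centralizes `K` iff it is central in `G`. -/
theorem inf_centralizer_eq_inf_center {G : Type*} [Group G]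
    (σ : G ≃* G) (hσ : ∀ g, σ (σ g) = g)
    (T : Subgroup G) (hTcomm : ∀ a ∈ T, ∀ b ∈ T, a * b = b * a)
    (hσT : ∀ t ∈ T, σ t = t⁻¹)
    (polar : ∀ g : G, ∃ k ∈ fixSubgroup σ, ∃ t ∈ T, ∃ l ∈ fixSubgroup σ,
      g = k * t * l) :
    T ⊓ Subgroup.centralizer (fixSubgroup σ : Set G) = T ⊓ Subgroup.center G := by
  apply le_antisymm
  · rintro x ⟨hxT, hxC⟩
    refine ⟨hxT, Subgroup.mem_center_iff.mpr fun g => ?_⟩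
    obtain ⟨k, hk, t, ht, l, hl, rfl⟩ := polar g
    have hk' : k * x = x * k := hxC k hk
    have hl' : l * x = x * l := hxC l hl
    have ht' : t * x = x * t := hTcomm t ht x hxT
    calc k * t * l * x = k * t * (x * l) := by rw [mul_assoc, hl']
      _ = k * (t * x) * l := by group
      _ = k * (x * t) * l := by rw [ht']
      _ = (k * x) * t * l := by group
      _ = x * (k * t * l) := by rw [hk']; group
  · exact inf_le_inf_left _ (Subgroup.center_le_centralizer _)
end

section
/- Assume in addition that every element of T is the square of an element of T. Then the Cartan map η(u) = u·σ(u)⁻¹ maps the normalizer N_G(K) into F = T ∩ Z(G), is constant on left cosets of K, and the induced map N_G(K)/K → F, uK ↦ u·σ(u)⁻¹, is a group isomorphism. -/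
/-!
Write `n = k t l` with `k, l ∈ K` and `t ∈ T`. Then `η(n) = k t² k⁻¹`, and if `n` normalizes `K`
so does `t`; since `σ` inverts `t`, applying `σ` to `t x t⁻¹ ∈ K` shows that `t²` commutes with
every `x ∈ K`. Commuting with `K` and with the abelian `T`, the element `t²` is central by the
polar decomposition, so `η(n) = t² ∈ T ∩ Z(G)`. The identity `η(u) = η(v) ↔ u⁻¹ v ∈ K` holds in
all of `G`, and `η` is multiplicative as soon as its values are central. Conversely, for `f ∈ F`
choose `s ∈ T` with `s² = f`; as `s²` is central, `σ (s x s⁻¹) = s σ(x) s⁻¹`, so `s` normalizes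
`K`, and `η(s) = s² = f`.
-/

section Cartan

variable {G : Type*} [Group G] (σ : G ≃* G)

theorem mem_fixSubgroup_iff {g : G} : g ∈ fixSubgroup σ ↔ σ g = g := Iff.rfl

theorem cartan_eq_cartan_iff (u v : G) :
    u * (σ u)⁻¹ = v * (σ v)⁻¹ ↔ u⁻¹ * v ∈ fixSubgroup σ := by
  rw [mem_fixSubgroup_iff, map_mul, map_inv]
  constructor
  · intro h
    calc (σ u)⁻¹ * σ v = u⁻¹ * (u * (σ u)⁻¹) * σ v := by group
      _ = u⁻¹ * v := by rw [h]; group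
  · intro h
    calc u * (σ u)⁻¹ = u * ((σ u)⁻¹ * σ v) * (σ v)⁻¹ := by group
      _ = v * (σ v)⁻¹ := by rw [h]; group

theorem cartan_mul_of_mem_fixSubgroup (u : G) {k : G} (hk : k ∈ fixSubgroup σ) :
    (u * k) * (σ (u * k))⁻¹ = u * (σ u)⁻¹ := by
  rw [map_mul, (mem_fixSubgroup_iff σ).mp hk]
  group

theorem cartan_mul_of_mem_center {u v : G} (hv : v * (σ v)⁻¹ ∈ Subgroup.center G) :
    (u * v) * (σ (u * v))⁻¹ = (u * (σ u)⁻¹) * (v * (σ v)⁻¹) := by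
  have hc := Subgroup.mem_center_iff.mp hv
  calc (u * v) * (σ (u * v))⁻¹ = u * (v * (σ v)⁻¹) * (σ u)⁻¹ := by rw [map_mul]; group
    _ = (u * (σ u)⁻¹) * (v * (σ v)⁻¹) := by rw [hc u, mul_assoc, ← hc]

theorem cartan_polar {k t l : G} (hk : σ k = k) (ht : σ t = t⁻¹) (hl : σ l = l) :
    (k * t * l) * (σ (k * t * l))⁻¹ = k * (t * t) * k⁻¹ := by
  rw [map_mul, map_mul, hk, hl, ht]
  group

theorem map_conj_of_sq_mem_center {t : G} (ht : σ t = t⁻¹)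
    (hcent : t * t ∈ Subgroup.center G) (x : G) :
    σ (t * x * t⁻¹) = t * σ x * t⁻¹ := by
  have hc := Subgroup.mem_center_iff.mp hcent (σ x)
  calc σ (t * x * t⁻¹) = t⁻¹ * (σ x * (t * t)) * t⁻¹ := by
        rw [map_mul, map_mul, map_inv, ht, inv_inv]; group
    _ = t * σ x * t⁻¹ := by rw [hc]; group

theorem mem_normalizer_fixSubgroup_of_sq_mem_center {t : G} (ht : σ t = t⁻¹)
    (hcent : t * t ∈ Subgroup.center G) :
    t ∈ Subgroup.normalizer (fixSubgroup σ : Set G) := by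
  refine Subgroup.mem_normalizer_iff.mpr fun x => ?_
  simp only [mem_fixSubgroup_iff, map_conj_of_sq_mem_center σ ht hcent,
    mul_left_inj, mul_right_inj]

theorem commute_sq_of_mem_normalizer_fixSubgroup {t : G} (ht : σ t = t⁻¹)
    (htN : t ∈ Subgroup.normalizer (fixSubgroup σ : Set G)) {x : G}
    (hx : x ∈ fixSubgroup σ) : Commute (t * t) x := by
  have hfix : σ (t * x * t⁻¹) = t * x * t⁻¹ := (Subgroup.mem_normalizer_iff.mp htN x).mp hx
  rw [map_mul, map_mul, map_inv, ht, (mem_fixSubgroup_iff σ).mp hx, inv_inv] at hfix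
  calc (t * t) * x = t * (t * x * t⁻¹) * t := by group
    _ = t * (t⁻¹ * x * t) * t := by rw [hfix]
    _ = x * (t * t) := by group

theorem mem_center_of_polar (T : Subgroup G)
    (polar : ∀ g : G, ∃ k ∈ fixSubgroup σ, ∃ t ∈ T, ∃ l ∈ fixSubgroup σ, g = k * t * l)
    {z : G} (hK : ∀ x ∈ fixSubgroup σ, Commute z x) (hT : ∀ s ∈ T, Commute z s) :
    z ∈ Subgroup.center G := by
  refine Subgroup.mem_center_iff.mpr fun g => ?_
  obtain ⟨k, hk, s, hs, l, hl, rfl⟩ := polar g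
  exact (((hK k hk).mul_right (hT s hs)).mul_right (hK l hl)).symm.eq

theorem cartan_mem_inf_center_of_mem_normalizer (T : Subgroup G)
    (hTcomm : ∀ a ∈ T, ∀ b ∈ T, a * b = b * a) (hσT : ∀ t ∈ T, σ t = t⁻¹)
    (polar : ∀ g : G, ∃ k ∈ fixSubgroup σ, ∃ t ∈ T, ∃ l ∈ fixSubgroup σ, g = k * t * l)
    {n : G} (hn : n ∈ Subgroup.normalizer (fixSubgroup σ : Set G)) :
    n * (σ n)⁻¹ ∈ T ⊓ Subgroup.center G := by
  obtain ⟨k, hk, t, ht, l, hl, rfl⟩ := polar n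
  have htN : t ∈ Subgroup.normalizer (fixSubgroup σ : Set G) := by
    have hkN := Subgroup.le_normalizer hk
    have hlN := Subgroup.le_normalizer hl
    simpa [mul_assoc] using mul_mem (mul_mem (inv_mem hkN) hn) (inv_mem hlN)
  have hK : ∀ x ∈ fixSubgroup σ, Commute (t * t) x := fun x hx =>
    commute_sq_of_mem_normalizer_fixSubgroup σ (hσT t ht) htN hx
  rw [cartan_polar σ hk (hσT t ht) hl, ← (hK k hk).eq, mul_inv_cancel_right]
  exact ⟨mul_mem ht ht,
    mem_center_of_polar σ T polar hK fun s hs => hTcomm _ (mul_mem ht ht) s hs⟩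

theorem exists_mem_normalizer_cartan_eq (T : Subgroup G) (hσT : ∀ t ∈ T, σ t = t⁻¹)
    (hsq : ∀ t ∈ T, ∃ s ∈ T, s * s = t) {f : G} (hf : f ∈ T ⊓ Subgroup.center G) :
    ∃ n ∈ Subgroup.normalizer (fixSubgroup σ : Set G), n * (σ n)⁻¹ = f := by
  obtain ⟨s, hs, rfl⟩ := hsq f hf.1
  exact ⟨s, mem_normalizer_fixSubgroup_of_sq_mem_center σ (hσT s hs) hf.2,
    by rw [hσT s hs, inv_inv]⟩

end Cartan

theorem cartan_map_induces_isomorphism_general {G : Type*} [Group G]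
    (σ : G ≃* G)
    (T : Subgroup G) (hTcomm : ∀ a ∈ T, ∀ b ∈ T, a * b = b * a)
    (hσT : ∀ t ∈ T, σ t = t⁻¹)
    (polar : ∀ g : G, ∃ k ∈ fixSubgroup σ, ∃ t ∈ T, ∃ l ∈ fixSubgroup σ,
      g = k * t * l)
    (hsq : ∀ t ∈ T, ∃ s ∈ T, s * s = t) :
    (∀ n ∈ Subgroup.normalizer (fixSubgroup σ : Set G),
        n * (σ n)⁻¹ ∈ T ⊓ Subgroup.center G) ∧
    (∀ n ∈ Subgroup.normalizer (fixSubgroup σ : Set G), ∀ k ∈ fixSubgroup σ,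
        (n * k) * (σ (n * k))⁻¹ = n * (σ n)⁻¹) ∧
    (∀ n ∈ Subgroup.normalizer (fixSubgroup σ : Set G), ∀ m ∈ Subgroup.normalizer (fixSubgroup σ : Set G),
        (n * m) * (σ (n * m))⁻¹ = (n * (σ n)⁻¹) * (m * (σ m)⁻¹)) ∧
    (∀ n ∈ Subgroup.normalizer (fixSubgroup σ : Set G), ∀ m ∈ Subgroup.normalizer (fixSubgroup σ : Set G),
        (n * (σ n)⁻¹ = m * (σ m)⁻¹ ↔ n⁻¹ * m ∈ fixSubgroup σ)) ∧
    (∀ f ∈ T ⊓ Subgroup.center G,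
        ∃ n ∈ Subgroup.normalizer (fixSubgroup σ : Set G), n * (σ n)⁻¹ = f) := by
  have hF : ∀ n ∈ Subgroup.normalizer (fixSubgroup σ : Set G),
      n * (σ n)⁻¹ ∈ T ⊓ Subgroup.center G := fun n hn =>
    cartan_mem_inf_center_of_mem_normalizer σ T hTcomm hσT polar hn
  exact ⟨hF,
    fun n _ k hk => cartan_mul_of_mem_fixSubgroup σ n hk,
    fun _ _ m hm => cartan_mul_of_mem_center σ (hF m hm).2,
    fun n _ m _ => cartan_eq_cartan_iff σ n m,
    fun _ hf => exists_mem_normalizer_cartan_eq σ T hσT hsq hf⟩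

/-- Under the polar decomposition `G = KTK` and assuming every element of `T`
is a square in `T`, the Cartan map `η(u) = u·σ(u)⁻¹` maps `N_G(K)` into
`F = T ∩ Z(G)`, is constant on left cosets of `K`, and the induced map
`N_G(K)/K → F` is a group isomorphism (it is multiplicative, has fibers the
left cosets of `K`, and is surjective onto `F`). -/
theorem cartan_map_induces_isomorphism {G : Type*} [Group G]
    (σ : G ≃* G) (hσ : ∀ g, σ (σ g) = g)
    (T : Subgroup G) (hTcomm : ∀ a ∈ T, ∀ b ∈ T, a * b = b * a)
    (hσT : ∀ t ∈ T, σ t = t⁻¹)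
    (polar : ∀ g : G, ∃ k ∈ fixSubgroup σ, ∃ t ∈ T, ∃ l ∈ fixSubgroup σ,
      g = k * t * l)
    (hsq : ∀ t ∈ T, ∃ s ∈ T, s * s = t) :
    (∀ n ∈ Subgroup.normalizer (fixSubgroup σ : Set G),
        n * (σ n)⁻¹ ∈ T ⊓ Subgroup.center G) ∧
    (∀ n ∈ Subgroup.normalizer (fixSubgroup σ : Set G), ∀ k ∈ fixSubgroup σ,
        (n * k) * (σ (n * k))⁻¹ = n * (σ n)⁻¹) ∧
    (∀ n ∈ Subgroup.normalizer (fixSubgroup σ : Set G), ∀ m ∈ Subgroup.normalizer (fixSubgroup σ : Set G),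
        (n * m) * (σ (n * m))⁻¹ = (n * (σ n)⁻¹) * (m * (σ m)⁻¹)) ∧
    (∀ n ∈ Subgroup.normalizer (fixSubgroup σ : Set G), ∀ m ∈ Subgroup.normalizer (fixSubgroup σ : Set G),
        (n * (σ n)⁻¹ = m * (σ m)⁻¹ ↔ n⁻¹ * m ∈ fixSubgroup σ)) ∧
    (∀ f ∈ T ⊓ Subgroup.center G,
        ∃ n ∈ Subgroup.normalizer (fixSubgroup σ : Set G), n * (σ n)⁻¹ = f) :=
  cartan_map_induces_isomorphism_general σ T hTcomm hσT polar hsq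
end
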